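/- arXiv:0910.0531 — 2 statements merged into one kernel-verified Lean document; each statement's English description precedes it below -/
import Mathlib

section
/- For every n ≥ 1 there is a homeomorphism from the reduced suspension S(ℋⁿ, θ) of the n-dimensional Hawaiian earring onto the (n+1)-dimensional Hawaiian earring ℋ^{n+1} that sends the basepoint of S(ℋⁿ, θ) (the class of the collapsed set) to the basepoint θ of ℋ^{n+1}. -/
/-- The `n`-dimensional Hawaiian earring, as a subspace of euclidean `(n+1)`-space. -/
def Hawaiian (n : ℕ) : Set (EuclideanSpace ℝ (Fin (n + 1))) :=
  {x | ∃ k : ℕ, 1 ≤ k ∧ (x 0 - 1 / k) ^ 2 + ∑ i : Fin n, x i.succ ^ 2 = (1 / k) ^ 2}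

/-- The basepoint `θ = (0, …, 0)` of the Hawaiian earring. -/
def hawaiianBase (n : ℕ) : Hawaiian n :=
  ⟨0, 1, le_refl 1, by norm_num⟩

open scoped unitInterval

/-- The setoid collapsing a subset `A` of `Z` to a single point. -/
def collapseSetoid {Z : Type} (A : Set Z) : Setoid Z where
  r a b := a = b ∨ (a ∈ A ∧ b ∈ A)
  iseqv := ⟨fun _ => Or.inl rfl, by aesop, by aesop⟩

/-- The subset `(Z × {0}) ∪ (Z × {1}) ∪ ({z₀} × I)` of `Z × I` which is collapsed to form the
reduced suspension. -/
def suspCollapseSet {Z : Type} (z₀ : Z) : Set (Z × I) :=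
  {p | p.2 = 0 ∨ p.2 = 1 ∨ p.1 = z₀}

/-- The reduced suspension `S(Z, z₀)`: the quotient of `Z × I` collapsing
`(Z × {0}) ∪ (Z × {1}) ∪ ({z₀} × I)` to a point, with the quotient topology. -/
abbrev ReducedSuspension (Z : Type) [TopologicalSpace Z] (z₀ : Z) : Type :=
  Quotient (collapseSetoid (suspCollapseSet z₀))

/-- The basepoint of the reduced suspension: the class of the collapsed set. -/
def reducedSuspensionBase (Z : Type) [TopologicalSpace Z] (z₀ : Z) :
    ReducedSuspension Z z₀ :=
  Quotient.mk _ (z₀, 0)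

/-!
Inversion `ι` in the unit sphere maps `ℋⁿ \ {0}` onto the union of the parallel hyperplanes
`{x₀ = k / 2}`, `k ≥ 1`, of `ℝⁿ⁺¹`. With a homeomorphism `σ : (0, 1) → ℝ`, the map
`(x, t) ↦ ι (ι x, σ t)` is therefore a bijection from `(ℋⁿ \ {0}) × (0, 1)` onto `ℋⁿ⁺¹ \ {0}`,
and it tends to `0` at the collapsed set. It thus induces a continuous bijection from the compact
space `S(ℋⁿ, θ)` onto the Hausdorff space `ℋⁿ⁺¹`, which is a homeomorphism.
-/

open Set Function EuclideanGeometry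

theorem exists_homeomorph_quotient_collapseSetoid {X Y : Type} [TopologicalSpace X]
    [CompactSpace X] [TopologicalSpace Y] [T2Space Y] {A : Set X} {g : X → Y} {y₀ : Y}
    (hg : Continuous g) (hsurj : Surjective g) (hfiber : g ⁻¹' {y₀} = A)
    (hinj : InjOn g Aᶜ) :
    ∃ e : Quotient (collapseSetoid A) ≃ₜ Y, ∀ a ∈ A, e (Quotient.mk _ a) = y₀ := by
  have hA : ∀ {a}, a ∈ A ↔ g a = y₀ := by simp [← hfiber]
  let g' : Quotient (collapseSetoid A) → Y := Quotient.lift g <| by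
    rintro a b (rfl | ⟨ha, hb⟩)
    exacts [rfl, (hA.1 ha).trans (hA.1 hb).symm]
  have hbij : Bijective g' := by
    constructor
    · refine Quotient.ind₂ fun a b hab => Quotient.sound ?_
      by_cases ha : a ∈ A
      · exact Or.inr ⟨ha, hA.2 ((hA.1 ha).symm.trans hab).symm⟩
      · exact Or.inl (hinj ha (fun hb => ha (hA.2 (hab.trans (hA.1 hb)))) hab)
    · intro y
      obtain ⟨a, rfl⟩ := hsurj y
      exact ⟨Quotient.mk _ a, rfl⟩
  exact ⟨(hg.quotient_lift _).homeoOfEquivCompactToT2 (f := .ofBijective g' hbij),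
    fun a ha => hA.1 ha⟩

theorem notMem_suspCollapseSet_iff {Z : Type} {z₀ : Z} {p : Z × I} :
    p ∉ suspCollapseSet z₀ ↔ p.1 ≠ z₀ ∧ (p.2 : ℝ) ∈ Ioo 0 1 := by
  obtain ⟨z, t, ht0, ht1⟩ := p
  simp only [suspCollapseSet, mem_ofPred_eq, not_or, Subtype.ext_iff, Icc.coe_zero, Icc.coe_one,
    mem_Ioo, ht0.lt_iff_ne', ht1.lt_iff_ne]
  tauto

namespace EuclideanSpace

variable {m : ℕ}

theorem inversion_zero_one (x : EuclideanSpace ℝ (Fin m)) :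
    inversion 0 1 x = (‖x‖ ^ 2)⁻¹ • x := by
  simp [inversion, inv_pow]

def snoc (v : EuclideanSpace ℝ (Fin m)) (s : ℝ) : EuclideanSpace ℝ (Fin (m + 1)) :=
  WithLp.toLp 2 (Fin.snoc v.ofLp s)

@[simp] theorem snoc_castSucc (v : EuclideanSpace ℝ (Fin m)) (s : ℝ) (i : Fin m) :
    snoc v s i.castSucc = v i := by
  simp [snoc]

@[simp] theorem snoc_last (v : EuclideanSpace ℝ (Fin m)) (s : ℝ) :
    snoc v s (Fin.last m) = s := by
  simp [snoc]

theorem snoc_injective2 : Injective2 (snoc (m := m)) := fun _ _ _ _ h =>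
  have h' := Fin.snoc_injective2 (WithLp.toLp_injective 2 h)
  ⟨WithLp.ofLp_injective 2 h'.1, h'.2⟩

theorem snoc_init_self (w : EuclideanSpace ℝ (Fin (m + 1))) :
    snoc (WithLp.toLp 2 (Fin.init w.ofLp)) (w (Fin.last m)) = w :=
  congrArg (WithLp.toLp 2) (Fin.snoc_init_self _)

theorem smul_snoc (c : ℝ) (v : EuclideanSpace ℝ (Fin m)) (s : ℝ) :
    c • snoc v s = snoc (c • v) (c * s) := by
  ext i; induction i using Fin.lastCases <;> simp

theorem norm_snoc_sq (v : EuclideanSpace ℝ (Fin m)) (s : ℝ) :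
    ‖snoc v s‖ ^ 2 = ‖v‖ ^ 2 + s ^ 2 := by
  simp [EuclideanSpace.real_norm_sq_eq, Fin.sum_univ_castSucc]

theorem continuous_snoc : Continuous fun p : EuclideanSpace ℝ (Fin m) × ℝ => snoc p.1 p.2 := by
  refine (PiLp.continuous_toLp 2 _).comp (continuous_pi fun i => ?_)
  induction i using Fin.lastCases <;> simp only [Fin.snoc_castSucc, Fin.snoc_last] <;> fun_prop

end EuclideanSpace

section Hawaiian

variable {m : ℕ} {x : EuclideanSpace ℝ (Fin (m + 1))}

theorem mem_hawaiian_iff : x ∈ Hawaiian m ↔ ∃ k : ℕ, 1 ≤ k ∧ k * ‖x‖ ^ 2 = 2 * x 0 := by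
  have hnorm : ‖x‖ ^ 2 = x 0 ^ 2 + ∑ i : Fin m, x i.succ ^ 2 := by
    simp [EuclideanSpace.real_norm_sq_eq, Fin.sum_univ_succ]
  refine exists_congr fun k => and_congr_right fun hk => ?_
  have hk : (k : ℝ) ≠ 0 := by positivity
  have hsub : (x 0 - 1 / k) ^ 2 + ∑ i : Fin m, x i.succ ^ 2 - (1 / k) ^ 2
      = (k * ‖x‖ ^ 2 - 2 * x 0) / k := by
    rw [hnorm]; field_simp; ring
  rw [← sub_eq_zero, hsub, div_eq_zero_iff, sub_eq_zero, or_iff_left hk]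

@[simp] theorem coe_hawaiianBase (m : ℕ) :
    (hawaiianBase m : EuclideanSpace ℝ (Fin (m + 1))) = 0 :=
  rfl

theorem zero_mem_hawaiian : (0 : EuclideanSpace ℝ (Fin (m + 1))) ∈ Hawaiian m :=
  (hawaiianBase m).2

theorem mem_hawaiian_iff_inversion (hx : x ≠ 0) :
    x ∈ Hawaiian m ↔ ∃ k : ℕ, 1 ≤ k ∧ 2 * inversion 0 1 x 0 = k := by
  have hx : ‖x‖ ^ 2 ≠ 0 := by positivity
  rw [mem_hawaiian_iff, EuclideanSpace.inversion_zero_one]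
  refine exists_congr fun k => and_congr_right fun _ => ?_
  simp only [PiLp.smul_apply, smul_eq_mul]
  field_simp
  constructor <;> intro h <;> linarith

theorem isCompact_hawaiian (m : ℕ) : IsCompact (Hawaiian m) := by
  refine Metric.isCompact_of_isClosed_isBounded ?_
    ((Metric.isBounded_closedBall (x := 0) (r := 2)).subset ?_)
  · have hK : IsClosed (Nat.cast '' Ici 1 : Set ℝ) :=
      Nat.isClosedEmbedding_coe_real.isClosedMap _ (isClosed_discrete _)
    have hcompl : (Hawaiian m)ᶜ = {x | x ≠ 0} ∩
        (fun x : EuclideanSpace ℝ (Fin (m + 1)) => 2 * inversion 0 1 x 0) ⁻¹'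
          (Nat.cast '' Ici 1)ᶜ := by
      ext x
      by_cases hx : x = 0
      · simp [hx, zero_mem_hawaiian]
      · simp [hx, mem_hawaiian_iff_inversion hx, eq_comm]
    rw [← isOpen_compl_iff, hcompl]
    refine ContinuousOn.isOpen_inter_preimage ?_ isOpen_ne hK.isOpen_compl
    exact continuousOn_const.mul ((PiLp.continuous_apply 2 _ 0).comp_continuousOn
      (continuousOn_const.inversion continuousOn_const continuousOn_id fun _ hx => hx))
  · intro x hx
    obtain ⟨k, hk, hkx⟩ := mem_hawaiian_iff.1 hx
    have hk : (1 : ℝ) ≤ k := by exact_mod_cast hk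
    have h0 : x 0 ≤ ‖x‖ := (le_abs_self _).trans (PiLp.norm_apply_le x 0)
    rw [Metric.mem_closedBall, dist_zero_right]
    nlinarith [norm_nonneg x]

end Hawaiian

section SuspensionMap

open EuclideanSpace

variable {m : ℕ} {x : EuclideanSpace ℝ (Fin m)} {t : ℝ}

noncomputable def suspParam (t : ℝ) : ℝ := (2 * t - 1) / (t * (1 - t))

theorem bijOn_suspParam : BijOn suspParam (Ioo 0 1) univ := by
  refine ⟨mapsTo_univ _ _, ?_, ?_⟩
  · rintro t ⟨ht0, ht1⟩ t' ⟨ht0', ht1'⟩ h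
    have hu : t * (1 - t) ≠ 0 := by nlinarith
    have hu' : t' * (1 - t') ≠ 0 := by nlinarith
    rw [suspParam, suspParam, div_eq_div_iff hu hu'] at h
    have hpos : 0 < t * t' + (1 - t) * (1 - t') := by nlinarith
    have key : (t - t') * (t * t' + (1 - t) * (1 - t')) = 0 := by linear_combination h
    linarith [(mul_eq_zero.1 key).resolve_right hpos.ne']
  · intro s _
    set r := Real.sqrt (s ^ 2 + 4)
    have hr : r ^ 2 = s ^ 2 + 4 := Real.sq_sqrt (by positivity)
    have hsr : s < r := by nlinarith [Real.sqrt_nonneg (s ^ 2 + 4)]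
    have hm : 0 < 2 - s + r := by linarith
    have ht0 : 0 < 2 / (2 - s + r) := by positivity
    have ht1 : 2 / (2 - s + r) < 1 := (div_lt_one hm).2 (by linarith)
    refine ⟨2 / (2 - s + r), ⟨ht0, ht1⟩, ?_⟩
    rw [suspParam, div_eq_iff (mul_pos ht0 (sub_pos.2 ht1)).ne']
    field_simp
    linear_combination (-1) * hr

/-- `ι (snoc (ι x) (suspParam t))` with denominators cleared, which extends it continuously by `0`
to `x = 0` and `t ∈ {0, 1}`. -/
noncomputable def suspensionMap (x : EuclideanSpace ℝ (Fin m)) (t : ℝ) :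
    EuclideanSpace ℝ (Fin (m + 1)) :=
  ((t * (1 - t)) ^ 2 + (2 * t - 1) ^ 2 * ‖x‖ ^ 2)⁻¹ •
    snoc ((t * (1 - t)) ^ 2 • x) ((2 * t - 1) * (t * (1 - t)) * ‖x‖ ^ 2)

theorem suspensionMap_denom_pos (hx : x ≠ 0) (t : ℝ) :
    0 < (t * (1 - t)) ^ 2 + (2 * t - 1) ^ 2 * ‖x‖ ^ 2 := by
  have hx : 0 < ‖x‖ ^ 2 := by positivity
  by_cases hu : t * (1 - t) = 0
  · have hb : (2 * t - 1) ^ 2 = 1 := by linear_combination (-4) * hu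
    simpa [hu, hb] using hx
  · positivity

theorem norm_suspensionMap_sq (x : EuclideanSpace ℝ (Fin m)) (t : ℝ) :
    ‖suspensionMap x t‖ ^ 2 =
      (t * (1 - t)) ^ 2 * ‖x‖ ^ 2 / ((t * (1 - t)) ^ 2 + (2 * t - 1) ^ 2 * ‖x‖ ^ 2) := by
  rw [suspensionMap]
  set u := t * (1 - t)
  set D := u ^ 2 + (2 * t - 1) ^ 2 * ‖x‖ ^ 2
  have hsnoc : ‖snoc (u ^ 2 • x) ((2 * t - 1) * u * ‖x‖ ^ 2)‖ ^ 2 = u ^ 2 * ‖x‖ ^ 2 * D := by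
    rw [norm_snoc_sq, norm_smul, Real.norm_eq_abs, abs_pow, sq_abs]; ring
  rw [norm_smul, mul_pow, hsnoc, norm_inv, Real.norm_eq_abs, inv_pow, sq_abs]
  rcases eq_or_ne D 0 with hD | hD
  · simp [hD]
  · field_simp

theorem norm_suspensionMap_le (x : EuclideanSpace ℝ (Fin m)) (t : ℝ) :
    ‖suspensionMap x t‖ ≤ ‖x‖ := by
  refine (sq_le_sq₀ (norm_nonneg _) (norm_nonneg _)).1 ?_
  rw [norm_suspensionMap_sq]
  refine div_le_of_le_mul₀ (by positivity) (by positivity) ?_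
  nlinarith [sq_nonneg ((2 * t - 1) * ‖x‖ ^ 2)]

theorem suspensionMap_eq_zero_iff : suspensionMap x t = 0 ↔ t * (1 - t) = 0 ∨ x = 0 := by
  rw [← norm_eq_zero, ← sq_eq_zero_iff, norm_suspensionMap_sq, div_eq_zero_iff, mul_eq_zero,
    sq_eq_zero_iff, sq_eq_zero_iff, norm_eq_zero]
  refine or_iff_left_of_imp fun hD => or_iff_not_imp_right.2 fun hx => ?_
  exact absurd hD (suspensionMap_denom_pos hx t).ne'

theorem inversion_suspensionMap (hx : x ≠ 0) (ht : t * (1 - t) ≠ 0) :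
    inversion 0 1 (suspensionMap x t) = snoc (inversion 0 1 x) (suspParam t) := by
  have hD := (suspensionMap_denom_pos hx t).ne'
  have hx : ‖x‖ ^ 2 ≠ 0 := by positivity
  obtain ⟨ht0, ht1⟩ := mul_ne_zero_iff.1 ht
  rw [inversion_zero_one, inversion_zero_one, norm_suspensionMap_sq, suspensionMap, smul_smul,
    smul_snoc, smul_smul, suspParam]
  congr 1
  · congr 1
    field_simp
  · field_simp

theorem continuous_suspensionMap :
    Continuous fun p : EuclideanSpace ℝ (Fin m) × ℝ => suspensionMap p.1 p.2 := by
  refine continuous_iff_continuousAt.2 fun ⟨x, t⟩ => ?_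
  rcases eq_or_ne x 0 with rfl | hx
  · have hzero : suspensionMap (0 : EuclideanSpace ℝ (Fin m)) t = 0 :=
      suspensionMap_eq_zero_iff.2 (Or.inr rfl)
    rw [ContinuousAt, hzero]
    refine squeeze_zero_norm (fun p => norm_suspensionMap_le p.1 p.2) ?_
    simpa using (continuous_fst.tendsto ((0 : EuclideanSpace ℝ (Fin m)), t)).norm
  · have hD := (suspensionMap_denom_pos hx t).ne'
    have hu : Continuous fun p : EuclideanSpace ℝ (Fin m) × ℝ => p.2 * (1 - p.2) := by fun_prop
    have hb : Continuous fun p : EuclideanSpace ℝ (Fin m) × ℝ => 2 * p.2 - 1 := by fun_prop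
    have hn : Continuous fun p : EuclideanSpace ℝ (Fin m) × ℝ => ‖p.1‖ ^ 2 := by fun_prop
    refine ContinuousAt.smul (((hu.pow 2).add ((hb.pow 2).mul hn)).continuousAt.inv₀ hD) ?_
    exact (continuous_snoc.comp (((hu.pow 2).smul continuous_fst).prodMk
      ((hb.mul hu).mul hn))).continuousAt

end SuspensionMap

theorem suspensionMap_eq_zero_iff_mem_suspCollapseSet {m : ℕ} {p : Hawaiian m × I} :
    suspensionMap (p.1 : EuclideanSpace ℝ (Fin (m + 1))) p.2 = 0 ↔
      p ∈ suspCollapseSet (hawaiianBase m) := by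
  obtain ⟨⟨x, _⟩, ⟨t, _⟩⟩ := p
  simp only [suspCollapseSet, mem_ofPred_eq, Subtype.ext_iff, coe_hawaiianBase, Icc.coe_zero,
    Icc.coe_one, suspensionMap_eq_zero_iff, mul_eq_zero, sub_eq_zero, @eq_comm ℝ 1, or_assoc]

theorem suspensionMap_mem_hawaiian {m : ℕ} {x : EuclideanSpace ℝ (Fin (m + 1))}
    (hx : x ∈ Hawaiian m) (t : ℝ) : suspensionMap x t ∈ Hawaiian (m + 1) := by
  by_cases h : suspensionMap x t = 0
  · exact h ▸ zero_mem_hawaiian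
  obtain ⟨ht, hx0⟩ := not_or.1 (suspensionMap_eq_zero_iff.not.1 h)
  rw [mem_hawaiian_iff_inversion h, inversion_suspensionMap hx0 ht]
  exact (mem_hawaiian_iff_inversion hx0).1 hx

theorem injOn_suspensionMap {m : ℕ} :
    InjOn (fun p : EuclideanSpace ℝ (Fin m) × ℝ => suspensionMap p.1 p.2) ({0}ᶜ ×ˢ Ioo 0 1) := by
  rintro ⟨x, t⟩ ⟨hx, ht⟩ ⟨x', t'⟩ ⟨hx', ht'⟩ h
  have hu {s : ℝ} (hs : s ∈ Ioo 0 1) : s * (1 - s) ≠ 0 := (mul_pos hs.1 (sub_pos.2 hs.2)).ne'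
  have h := congrArg (inversion 0 1) h
  simp only [inversion_suspensionMap hx (hu ht), inversion_suspensionMap hx' (hu ht')] at h
  obtain ⟨hxx, htt⟩ := EuclideanSpace.snoc_injective2 h
  exact Prod.ext ((inversion_injective 0 one_ne_zero) hxx) (bijOn_suspParam.injOn ht ht' htt)

theorem exists_suspensionMap_eq {m : ℕ} {y : EuclideanSpace ℝ (Fin (m + 2))}
    (hy : y ∈ Hawaiian (m + 1)) (hy0 : y ≠ 0) :
    ∃ x ∈ Hawaiian m, ∃ t ∈ Ioo 0 1, suspensionMap x t = y := by
  set w := inversion 0 1 y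
  set v : EuclideanSpace ℝ (Fin (m + 1)) := WithLp.toLp 2 (Fin.init w.ofLp)
  obtain ⟨k, hk, hwk⟩ := (mem_hawaiian_iff_inversion hy0).1 hy
  have hv0 : v 0 = w 0 := rfl
  have hv : v ≠ 0 := fun hv => by
    have : (k : ℝ) = 0 := by rw [← hwk, ← hv0, hv]; simp
    exact absurd (Nat.cast_eq_zero.1 this) (by omega)
  obtain ⟨t, ht, hts⟩ := bijOn_suspParam.surjOn (mem_univ (w (Fin.last (m + 1))))
  have hx : inversion 0 1 v ≠ 0 := (inversion_eq_center one_ne_zero).not.2 hv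
  refine ⟨inversion 0 1 v, ?_, t, ht, ?_⟩
  · rw [mem_hawaiian_iff_inversion hx, inversion_inversion _ one_ne_zero, hv0]
    exact ⟨k, hk, hwk⟩
  · apply inversion_injective (0 : EuclideanSpace ℝ (Fin (m + 2))) one_ne_zero
    rw [inversion_suspensionMap hx (mul_pos ht.1 (sub_pos.2 ht.2)).ne',
      inversion_inversion _ one_ne_zero, hts]
    exact EuclideanSpace.snoc_init_self w

theorem reducedSuspension_hawaiian_homeomorph_general (n : ℕ) :
    ∃ e : ReducedSuspension (Hawaiian n) (hawaiianBase n) ≃ₜ Hawaiian (n + 1),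
      e (reducedSuspensionBase (Hawaiian n) (hawaiianBase n)) = hawaiianBase (n + 1) := by
  have : CompactSpace (Hawaiian n) := isCompact_iff_compactSpace.1 (isCompact_hawaiian n)
  let g : Hawaiian n × I → Hawaiian (n + 1) := fun p =>
    ⟨suspensionMap p.1 p.2, suspensionMap_mem_hawaiian p.1.2 p.2⟩
  have hfiber : g ⁻¹' {hawaiianBase (n + 1)} = suspCollapseSet (hawaiianBase n) :=
    Set.ext fun _ => Subtype.ext_iff.trans suspensionMap_eq_zero_iff_mem_suspCollapseSet
  have hsurj : Surjective g := by
    rintro ⟨y, hy⟩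
    rcases eq_or_ne y 0 with rfl | hy0
    · exact ⟨(hawaiianBase n, 0), (Set.ext_iff.1 hfiber _).2 (Or.inl rfl)⟩
    obtain ⟨x, hx, t, ht, rfl⟩ := exists_suspensionMap_eq hy hy0
    exact ⟨(⟨x, hx⟩, ⟨t, Ioo_subset_Icc_self ht⟩), rfl⟩
  have hmem : ∀ p ∉ suspCollapseSet (hawaiianBase n),
      ((p.1 : EuclideanSpace ℝ (Fin (n + 1))), (p.2 : ℝ)) ∈ ({0}ᶜ ×ˢ Ioo 0 1 : Set _) :=
    fun p hp => (notMem_suspCollapseSet_iff.1 hp).imp (fun h h0 => h (Subtype.ext h0)) id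
  have hinj : InjOn g (suspCollapseSet (hawaiianBase n))ᶜ := fun p hp q hq hpq =>
    (Subtype.val_injective.prodMap Subtype.val_injective)
      (injOn_suspensionMap (hmem p hp) (hmem q hq) (congrArg Subtype.val hpq))
  have hg : Continuous g := (continuous_suspensionMap.comp
    (continuous_subtype_val.prodMap continuous_subtype_val)).subtype_mk _
  obtain ⟨e, he⟩ := exists_homeomorph_quotient_collapseSetoid hg hsurj hfiber hinj
  exact ⟨e, he _ (Or.inl rfl)⟩

/-- For every `n ≥ 1` the reduced suspension of the `n`-dimensional Hawaiian earring is
homeomorphic to the `(n+1)`-dimensional Hawaiian earring, by a basepoint-preserving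
homeomorphism. -/
theorem reducedSuspension_hawaiian_homeomorph (n : ℕ) (hn : 1 ≤ n) :
    ∃ e : ReducedSuspension (Hawaiian n) (hawaiianBase n) ≃ₜ Hawaiian (n + 1),
      e (reducedSuspensionBase (Hawaiian n) (hawaiianBase n)) = hawaiianBase (n + 1) :=
  reducedSuspension_hawaiian_homeomorph_general n
end

section
/- Let C'(ℋ¹) = (ℋ¹ × [0,1]) / (ℋ¹ × {1}) be the unreduced cone over the 1-dimensional Hawaiian earring. Then C'(ℋ¹) is contractible, yet there exists a point pt ∈ C'(ℋ¹) such that the Hawaiian group ℋ₁(C'(ℋ¹), pt) is nontrivial: there is a continuous map f : ℋ¹ → C'(ℋ¹) with f(θ) = pt that is not homotopic rel {θ} to the constant map at pt. -/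
open scoped unitInterval

/-- The setoid on `Z × I` defining the unreduced cone: `Z × {1}` is collapsed to a point. -/
def unreducedConeSetoid (Z : Type) : Setoid (Z × I) where
  r a b := a = b ∨ (a.2 = 1 ∧ b.2 = 1)
  iseqv := ⟨fun _ => Or.inl rfl, by aesop, by aesop⟩

/-- The unreduced cone `C'(Z) = (Z × I) / (Z × {1})`, with the quotient topology. -/
abbrev UnreducedCone (Z : Type) [TopologicalSpace Z] : Type :=
  Quotient (unreducedConeSetoid Z)

/-!
The cone is contractible: push every point up its ray to the apex. For the second claim take
`f` the inclusion of `ℋ¹` as the base of the cone and `pt = (θ, 0)`. A homotopy rel `θ` from `f`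
to the constant map keeps `I × {θ}` at height `0`, so by compactness of `I` it misses the apex on
`I × V` for some neighbourhood `V` of `θ`, and `V` contains a whole circle of the earring.
Projecting the cone minus its apex onto its base and then retracting `ℋ¹` onto that circle turns
this into a null-homotopy of the identity of the circle, which homotopy lifting along the
covering `ℝ → S¹` rules out.
-/

open Topology Filter

namespace Circle

open Real Function

theorem not_continuous_of_leftInverse_exp {s : Circle → ℝ} (hs : LeftInverse exp s) :
    ¬ Continuous s := by
  intro hs_cont
  have hs_one : exp (s 1) = 1 := hs 1
  have hlift : s ∘ exp = (· + s 1) :=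
    isCoveringMap_exp.eq_of_comp_eq (hs_cont.comp exp.continuous) (by fun_prop)
      (funext fun t => by simp [hs (exp t), hs_one]) 0 (by simp)
  have h2π := congr_fun hlift (2 * π)
  simp at h2π

theorem not_homotopic_id_const (z : Circle) :
    ¬ (ContinuousMap.id Circle).Homotopic (.const Circle z) := by
  rintro ⟨H⟩
  obtain ⟨e, rfl⟩ := exp_surjective z
  let L := isCoveringMap_exp.liftHomotopy H.symm.toContinuousMap (.const Circle e)
    H.symm.apply_zero
  refine not_continuous_of_leftInverse_exp (s := fun a => L (1, a)) (fun a => ?_) (by fun_prop)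
  exact (congr_fun (isCoveringMap_exp.liftHomotopy_lifts ..) (1, a)).trans (H.symm.apply_one a)

end Circle

namespace UnreducedCone

variable {Z : Type} [TopologicalSpace Z]

def height : C(UnreducedCone Z, I) where
  toFun := Quotient.lift Prod.snd <| by rintro _ _ (rfl | ⟨h₁, h₂⟩) <;> simp [*]
  continuous_toFun := continuous_snd.quotient_lift _

def baseInclusion : C(Z, UnreducedCone Z) where
  toFun z := Quotient.mk _ (z, 0)
  continuous_toFun := continuous_quotient_mk'.comp (by fun_prop)

instance [Nonempty Z] : ContractibleSpace (UnreducedCone Z) := by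
  obtain ⟨z⟩ := ‹Nonempty Z›
  refine (contractible_iff_id_nullhomotopic _).mpr ⟨Quotient.mk _ (z, 1), ⟨?_⟩⟩
  let raise : I × UnreducedCone Z → UnreducedCone Z := fun p =>
    Quotient.lift (fun q : Z × I => Quotient.mk _ (q.1, max p.1 q.2))
      (by
        rintro _ _ (rfl | ⟨h₁, h₂⟩)
        · rfl
        · exact Quotient.sound
            (Or.inr ⟨by simp [h₁, unitInterval.le_one'], by simp [h₂, unitInterval.le_one']⟩)) p.2
  exact
    { toFun := raise
      continuous_toFun := isQuotientMap_quotient_mk'.continuous_lift_prod_right <|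
        continuous_quotient_mk'.comp (by fun_prop)
      map_zero_left := Quotient.ind fun q => by simp [raise]
      map_one_left := Quotient.ind fun q =>
        Quotient.sound (Or.inr ⟨by simp [unitInterval.le_one'], rfl⟩) }

variable (z₀ : Z)

noncomputable def baseProj : UnreducedCone Z → Z :=
  Quotient.lift (fun p => if p.2 = 1 then z₀ else p.1) <| by
    rintro _ _ (rfl | ⟨h₁, h₂⟩) <;> simp [*]

theorem baseProj_mk {z : Z} {t : I} (ht : t ≠ 1) : baseProj z₀ (Quotient.mk _ (z, t)) = z :=
  if_neg ht

theorem continuousOn_baseProj : ContinuousOn (baseProj z₀) {c | height c ≠ 1} :=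
  (isQuotientMap_quotient_mk'.continuousOn_isOpen_iff
    (isOpen_compl_singleton.preimage height.continuous)).mpr <|
      continuous_fst.continuousOn.congr fun _ hp => if_neg hp

theorem homotopic_of_homotopy_baseInclusion {X : Type*} [TopologicalSpace X] {f₀ f₁ : C(X, Z)}
    (F : (baseInclusion.comp f₀).Homotopy (baseInclusion.comp f₁))
    (hF : ∀ p, height (F p) ≠ 1) : f₀.Homotopic f₁ := by
  rcases isEmpty_or_nonempty X with _ | ⟨⟨x⟩⟩
  · exact Subsingleton.elim f₀ f₁ ▸ .refl f₀
  refine ⟨{ toFun := fun p => baseProj (f₀ x) (F p)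
            continuous_toFun := (continuousOn_baseProj _).comp_continuous F.continuous hF
            map_zero_left := fun y =>
              (congrArg _ (F.apply_zero y)).trans (baseProj_mk _ zero_ne_one)
            map_one_left := fun y =>
              (congrArg _ (F.apply_one y)).trans (baseProj_mk _ zero_ne_one) }⟩

end UnreducedCone

local notation "ℝ²" => EuclideanSpace ℝ (Fin 2)

namespace Hawaiian

instance (n : ℕ) : Nonempty (Hawaiian n) := ⟨hawaiianBase n⟩

-- Indexed from `0`: `circle k` has radius `1 / (k + 1)`, which avoids the junk value `1 / 0`.
def circle (k : ℕ) : Set ℝ² :=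
  {x | (x 0 - 1 / (k + 1)) ^ 2 + x 1 ^ 2 = (1 / (k + 1)) ^ 2}

theorem mem_one_iff {x : ℝ²} : x ∈ Hawaiian 1 ↔ ∃ k, x ∈ circle k := by
  simp only [Hawaiian, circle, Fin.sum_univ_one, Set.mem_ofPred_eq]
  constructor
  · rintro ⟨k, hk, hx⟩
    obtain ⟨k, rfl⟩ := Nat.exists_eq_add_of_le' hk
    exact ⟨k, by exact_mod_cast hx⟩
  · rintro ⟨k, hx⟩
    exact ⟨k + 1, k.succ_pos, by exact_mod_cast hx⟩

theorem circle_subset (k : ℕ) : circle k ⊆ Hawaiian 1 := fun _ hx => mem_one_iff.mpr ⟨k, hx⟩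

theorem isClosed_circle (k : ℕ) : IsClosed (circle k) :=
  isClosed_eq (by fun_prop) continuous_const

-- Inversion in the unit circle maps `circle k \ {0}` to the line `x 0 = (k + 1) / 2`;
-- twice that coordinate is the reciprocal radius of the earring circle through `x ≠ 0`.
noncomputable def invRadius (x : ℝ²) : ℝ := 2 * x 0 / (x 0 ^ 2 + x 1 ^ 2)

theorem norm_sq_eq (x : ℝ²) : ‖x‖ ^ 2 = x 0 ^ 2 + x 1 ^ 2 := by
  rw [EuclideanSpace.real_norm_sq_eq, Fin.sum_univ_two]

theorem coord_sq_add_sq_pos {x : ℝ²} (hx : x ≠ 0) : 0 < x 0 ^ 2 + x 1 ^ 2 :=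
  norm_sq_eq x ▸ pow_pos (norm_pos_iff.mpr hx) 2

theorem continuousAt_invRadius {x : ℝ²} (hx : x ≠ 0) : ContinuousAt invRadius x :=
  ContinuousAt.div (by fun_prop) (by fun_prop) (coord_sq_add_sq_pos hx).ne'

theorem mem_circle_iff_invRadius {x : ℝ²} (hx : x ≠ 0) {k : ℕ} :
    x ∈ circle k ↔ invRadius x = k + 1 := by
  have hk : (k : ℝ) + 1 ≠ 0 := k.cast_add_one_ne_zero
  rw [circle, Set.mem_ofPred_eq, invRadius, div_eq_iff (coord_sq_add_sq_pos hx).ne']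
  field_simp
  constructor
  · intro h
    have h' : ((k : ℝ) + 1) * ((k + 1) * (x 0 ^ 2 + x 1 ^ 2) - 2 * x 0) = 0 := by
      linear_combination h
    linarith [(mul_eq_zero.mp h').resolve_left hk]
  · intro h
    linear_combination (-((k : ℝ) + 1)) * h

theorem eventually_mem_circle {k : ℕ} {x : Hawaiian 1} (hx : (x : ℝ²) ∈ circle k)
    (hx₀ : (x : ℝ²) ≠ 0) : ∀ᶠ y : Hawaiian 1 in 𝓝 x, (y : ℝ²) ∈ circle k := by
  rw [mem_circle_iff_invRadius hx₀] at hx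
  have hne : ∀ᶠ y : Hawaiian 1 in 𝓝 x, (y : ℝ²) ≠ 0 :=
    continuousAt_subtype_val.eventually_ne hx₀
  have hnear : ∀ᶠ y : Hawaiian 1 in 𝓝 x, dist (invRadius y) (invRadius x) < 1 :=
    ((continuousAt_invRadius hx₀).comp continuousAt_subtype_val).eventually
      (Metric.ball_mem_nhds _ one_pos)
  filter_upwards [hne, hnear] with y hy₀ hy
  obtain ⟨m, hm⟩ := mem_one_iff.mp y.2
  rw [mem_circle_iff_invRadius hy₀] at hm ⊢
  rw [hm, hx, dist_add_right, Nat.dist_cast_real] at hy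
  have hmk : m = k := by_contra fun hmk => (Nat.pairwise_one_le_dist hmk).not_gt hy
  rw [hm, hmk]

noncomputable def chart (k : ℕ) (x : ℝ²) : ℂ :=
  ((k + 1) * x 0 - 1 : ℝ) + ((k + 1) * x 1 : ℝ) * Complex.I

theorem continuous_chart (k : ℕ) : Continuous (chart k) := by
  unfold chart
  fun_prop

theorem norm_chart {k : ℕ} {x : ℝ²} (hx : x ∈ circle k) : ‖chart k x‖ = 1 := by
  have hk : (k : ℝ) + 1 ≠ 0 := k.cast_add_one_ne_zero
  rw [Complex.norm_def, Real.sqrt_eq_one, chart, Complex.normSq_add_mul_I]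
  have hx' : (x 0 - 1 / (k + 1)) ^ 2 + x 1 ^ 2 = (1 / (k + 1)) ^ 2 := hx
  field_simp at hx'
  linear_combination hx'

theorem frontier_circle_subset (k : ℕ) :
    frontier {x : Hawaiian 1 | (x : ℝ²) ∈ circle k} ⊆ {hawaiianBase 1} := by
  intro x hx
  by_contra hx₀
  have hx₀ : (x : ℝ²) ≠ 0 := fun h => hx₀ (Subtype.ext h)
  have hmem : (x : ℝ²) ∈ circle k :=
    ((isClosed_circle k).preimage continuous_subtype_val).frontier_subset hx
  exact hx.2 (mem_interior_iff_mem_nhds.mpr (eventually_mem_circle hmem hx₀))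

open Classical in
noncomputable def retraction (k : ℕ) : C(Hawaiian 1, Circle) where
  toFun x := ⟨if (x : ℝ²) ∈ circle k then chart k x else -1, by
    split_ifs with h
    · exact mem_sphere_zero_iff_norm.mpr (norm_chart h)
    · exact (-1 : Circle).2⟩
  continuous_toFun := by
    refine Continuous.subtype_mk (Continuous.if (fun x hx => ?_)
      ((continuous_chart k).comp continuous_subtype_val) continuous_const) _
    rw [frontier_circle_subset k hx]
    simp [chart, hawaiianBase]

open Classical in
theorem coe_retraction (k : ℕ) (x : Hawaiian 1) :
    (retraction k x : ℂ) = if (x : ℝ²) ∈ circle k then chart k x else -1 :=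
  rfl

theorem retraction_base (k : ℕ) : retraction k (hawaiianBase 1) = -1 := by
  ext
  simp [coe_retraction, hawaiianBase, chart]

theorem mem_circle_loop (k : ℕ) (z : Circle) :
    !₂[(1 + (z : ℂ).re) / (k + 1), (z : ℂ).im / (k + 1)] ∈ circle k := by
  have hk : (k : ℝ) + 1 ≠ 0 := k.cast_add_one_ne_zero
  have hz := Circle.normSq_coe z
  rw [Complex.normSq_apply] at hz
  show ((1 + (z : ℂ).re) / (k + 1) - 1 / (k + 1)) ^ 2 + ((z : ℂ).im / (k + 1)) ^ 2 =
    (1 / (k + 1)) ^ 2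
  field_simp
  linear_combination hz

noncomputable def loop (k : ℕ) : C(Circle, Hawaiian 1) where
  toFun z := ⟨_, circle_subset k (mem_circle_loop k z)⟩
  continuous_toFun := by fun_prop

theorem loop_apply_zero (k : ℕ) (z : Circle) : (loop k z : ℝ²) 0 = (1 + (z : ℂ).re) / (k + 1) :=
  rfl

theorem loop_apply_one (k : ℕ) (z : Circle) : (loop k z : ℝ²) 1 = (z : ℂ).im / (k + 1) :=
  rfl

theorem retraction_comp_loop (k : ℕ) : (retraction k).comp (loop k) = .id Circle := by
  have hk : (k : ℝ) + 1 ≠ 0 := k.cast_add_one_ne_zero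
  ext z
  rw [ContinuousMap.comp_apply, coe_retraction,
    if_pos (show (loop k z : ℝ²) ∈ circle k from mem_circle_loop k z)]
  rw [chart, loop_apply_zero, loop_apply_one, mul_div_cancel₀ _ hk, mul_div_cancel₀ _ hk,
    add_sub_cancel_left, Complex.re_add_im, ContinuousMap.id_apply]

theorem norm_loop_le (k : ℕ) (z : Circle) : ‖(loop k z : ℝ²)‖ ≤ 2 / (k + 1) := by
  have hz := Circle.normSq_coe z
  rw [Complex.normSq_apply] at hz
  rw [← sq_le_sq₀ (norm_nonneg _) (by positivity), norm_sq_eq, loop_apply_zero, loop_apply_one,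
    div_pow, div_pow, div_pow, ← add_div]
  gcongr
  nlinarith [sq_nonneg (z : ℂ).im, sq_nonneg ((z : ℂ).re - 1)]

theorem tendsto_range_loop :
    Tendsto (fun k => Set.range (loop k)) atTop (𝓝 (hawaiianBase 1)).smallSets := by
  rw [tendsto_smallSets_iff]
  intro V hV
  obtain ⟨ε, hε, hball⟩ := Metric.mem_nhds_iff.mp hV
  have : Tendsto (fun k : ℕ => 2 / ((k : ℝ) + 1)) atTop (𝓝 0) := by
    simpa [div_eq_mul_inv] using
      (tendsto_one_div_add_atTop_nhds_zero_nat (𝕜 := ℝ)).const_mul 2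
  filter_upwards [this.eventually (gt_mem_nhds hε)] with k hk
  rintro _ ⟨z, rfl⟩
  apply hball
  rw [Metric.mem_ball, Subtype.dist_eq]
  show dist _ (0 : ℝ²) < ε
  rw [dist_zero_right]
  exact (norm_loop_le k z).trans_lt hk

end Hawaiian

/-- The unreduced cone over the 1-dimensional Hawaiian earring is contractible, yet its
1-dimensional Hawaiian group is nontrivial at some point `pt`: there is a continuous map
`f : ℋ¹ → C'(ℋ¹)` with `f θ = pt` which is not homotopic rel `{θ}` to the constant map. -/
theorem cone_hawaiian_contractible_nontrivial_hawaiianGroup :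
    ContractibleSpace (UnreducedCone (Hawaiian 1)) ∧
    ∃ (pt : UnreducedCone (Hawaiian 1)) (f : C(Hawaiian 1, UnreducedCone (Hawaiian 1))),
      f (hawaiianBase 1) = pt ∧
      ¬ f.HomotopicRel (ContinuousMap.const _ pt) {hawaiianBase 1} := by
  refine ⟨inferInstance, _, UnreducedCone.baseInclusion, rfl, ?_⟩
  rintro ⟨F⟩
  -- tube lemma: near `θ` the whole homotopy stays below the apex
  have hF : ∀ᶠ x in 𝓝 (hawaiianBase 1), ∀ s ∈ Set.univ, UnreducedCone.height (F (s, x)) ≠ 1 :=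
    isCompact_univ.eventually_forall_of_forall_eventually fun s _ =>
      (by fun_prop : Continuous fun p : Hawaiian 1 × I => UnreducedCone.height (F (p.2, p.1)))
        |>.continuousAt.eventually_ne (by rw [F.eq_fst s rfl]; exact zero_ne_one)
  obtain ⟨k, hk⟩ :=
    (Hawaiian.tendsto_range_loop.eventually (eventually_smallSets_forall.mpr hF)).exists
  have hloop : (Hawaiian.loop k).Homotopic (.const Circle (hawaiianBase 1)) :=
    UnreducedCone.homotopic_of_homotopy_baseInclusion (F.toHomotopy.comp (.refl _))
      fun p => hk _ ⟨p.2, rfl⟩ p.1 trivial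
  apply Circle.not_homotopic_id_const (-1)
  have := (ContinuousMap.Homotopic.refl (Hawaiian.retraction k)).comp hloop
  rwa [Hawaiian.retraction_comp_loop, ContinuousMap.comp_const, Hawaiian.retraction_base]
    at this
end
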